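/- Let n ≥ 1 and let ω_1, …, ω_n be complex numbers with nonzero imaginary parts, none lying on the real segment [0,1], and such that the 2n numbers ω_1, conj(ω_1), …, ω_n, conj(ω_n) are pairwise distinct. For each i set h^i(ω) = ∏_{j≠i} (ω − ω_j)(ω − conj(ω_j)). Then for every natural number m, the real integral ∫_0^1 x^m / ∏_{i=1}^n ((x − Re ω_i)² + (Im ω_i)²) dx equals Σ_{i=1}^n Im( g_m(ω_i) / h^i(ω_i) ) / Im(ω_i). -/

import Mathlib

open Complex Finset

/-- `g m ω = ω^m (Log(1 - 1/ω) + ∑_{k=1}^m 1/(k ω^k))`. -/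
noncomputable def g (m : ℕ) (ω : ℂ) : ℂ :=
  ω ^ m * (Complex.log (1 - 1 / ω) + ∑ k ∈ Finset.Icc 1 m, 1 / ((k : ℂ) * ω ^ k))

/-!
Since the `2n` numbers `ωᵢ, conj ωᵢ` are distinct and
`(x - Re ωᵢ)² + (Im ωᵢ)² = (x - ωᵢ)(x - conj ωᵢ)`, partial fractions (Lagrange's nodal weights)
write `x^m / ∏ᵢ (x - ωᵢ)(x - conj ωᵢ)` as a sum over these roots. The weight at `ωᵢ` is
`(2i Im ωᵢ · hⁱ(ωᵢ))⁻¹` and the weight at `conj ωᵢ` is its conjugate, so for real `x` each pair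
contributes `2 Re` of the first term, i.e. `Im (x^m / ((x - ωᵢ) hⁱ(ωᵢ))) / Im ωᵢ`.
It remains to see `∫₀¹ x^m / (x - ω) dx = g_m(ω)` for `ω ∉ [0,1]`. For `m = 0` this is the
integral representation of `Log (1 + z)` at `z = -1/ω`, valid because `1 - 1/ω` lies in the slit
plane when `ω ∉ [0,1]`; then `x^{m+1}/(x - ω) = x^m + ω x^m/(x - ω)` matches
`g_{m+1}(ω) = ω g_m(ω) + 1/(m+1)`.
-/

open ComplexConjugate Lagrange intervalIntegral

namespace Lagrange

variable {F ι : Type*} [Field F] [DecidableEq ι]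

theorem inv_prod_sub_eq_sum_nodalWeight {s : Finset ι} {v : ι → F} {x : F}
    (hvs : Set.InjOn v s) (hs : s.Nonempty) (hx : ∀ i ∈ s, x ≠ v i) :
    (∏ i ∈ s, (x - v i))⁻¹ = ∑ i ∈ s, nodalWeight s v i * (x - v i)⁻¹ := by
  have h := eval_interpolate_not_at_node (1 : ι → F) hx
  simp only [interpolate_one hvs hs, Polynomial.eval_one, eval_nodal, Pi.one_apply, mul_one] at h
  exact (eq_inv_of_mul_eq_one_right h.symm).symm

theorem nodalWeight_map {K : Type*} [Field K] (f : F →+* K) (s : Finset ι) (v : ι → F) (i : ι) :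
    nodalWeight s (f ∘ v) i = f (nodalWeight s v i) := by
  simp [nodalWeight, map_prod, map_inv₀, map_sub]

theorem nodalWeight_univ_comp_equiv {κ : Type*} [Fintype ι] [Fintype κ] [DecidableEq κ]
    (v : ι → F) (e : κ ≃ ι) (i : κ) :
    nodalWeight univ (v ∘ e) i = nodalWeight univ v (e i) := by
  rw [nodalWeight, nodalWeight, ← map_univ_equiv e, ← Equiv.coe_toEmbedding, ← map_erase,
    prod_map]
  rfl

end Lagrange

theorem Finset.univ_erase_inl {α β : Type*} [Fintype α] [Fintype β] [DecidableEq α]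
    [DecidableEq β] (i : α) :
    (univ : Finset (α ⊕ β)).erase (.inl i) = (univ.erase i).disjSum univ := by
  ext (j | j) <;> simp

theorem ofReal_sub_mul_ofReal_sub_conj (x : ℝ) (w : ℂ) :
    ((x : ℂ) - w) * (x - conj w) = ((x - w.re) ^ 2 + w.im ^ 2 : ℝ) := by
  rw [show (x : ℂ) - conj w = conj ((x : ℂ) - w) by simp, mul_conj, normSq_apply]
  simp only [sub_re, ofReal_re, sub_im, ofReal_im]
  push_cast
  ring

theorem re_div_two_mul_I (z : ℂ) (a : ℝ) : (z / (2 * a * I)).re = z.im / (2 * a) := by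
  rcases eq_or_ne a 0 with rfl | ha
  · simp
  · rw [div_re]
    simp only [mul_re, mul_im, re_ofNat, im_ofNat, ofReal_re, ofReal_im, I_re, I_im, normSq_apply]
    field_simp
    ring

section ConjugatePairs

variable {ι : Type*} (ω : ι → ℂ)

def rootsWithConj : ι ⊕ ι → ℂ := Sum.elim ω fun i => conj (ω i)

@[simp] theorem rootsWithConj_inl (i : ι) : rootsWithConj ω (.inl i) = ω i := rfl

@[simp] theorem rootsWithConj_inr (i : ι) : rootsWithConj ω (.inr i) = conj (ω i) := rfl

theorem conj_comp_rootsWithConj : conj ∘ rootsWithConj ω = rootsWithConj ω ∘ Sum.swap := by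
  funext i
  cases i <;> simp

variable [Fintype ι] [DecidableEq ι]

theorem nodalWeight_rootsWithConj_inr (i : ι) :
    nodalWeight univ (rootsWithConj ω) (.inr i) =
      conj (nodalWeight univ (rootsWithConj ω) (.inl i)) := by
  rw [← nodalWeight_map, conj_comp_rootsWithConj]
  exact (nodalWeight_univ_comp_equiv _ (Equiv.sumComm ι ι) (.inl i)).symm

theorem nodalWeight_rootsWithConj_inl (i : ι) :
    nodalWeight univ (rootsWithConj ω) (.inl i) =
      (2 * (ω i).im * I * ∏ j ∈ univ.erase i, (ω i - ω j) * (ω i - conj (ω j)))⁻¹ := by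
  rw [nodalWeight, prod_inv_distrib, univ_erase_inl, prod_disjSum,
    ← mul_prod_erase univ (fun j => rootsWithConj ω (.inl i) - rootsWithConj ω (.inr j))
      (mem_univ i)]
  simp only [rootsWithConj_inl, rootsWithConj_inr, sub_conj, prod_mul_distrib]
  push_cast
  ring

theorem div_prod_eq_sum_im [Nonempty ι] (hinj : Function.Injective (rootsWithConj ω)) (c x : ℝ) :
    c / ∏ i, ((x - (ω i).re) ^ 2 + (ω i).im ^ 2) =
      ∑ i, ((c : ℂ) / (x - ω i) / ∏ j ∈ univ.erase i, (ω i - ω j) * (ω i - conj (ω j))).im /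
        (ω i).im := by
  set α := rootsWithConj ω
  have him (i : ι) : (ω i).im ≠ 0 := fun h =>
    Sum.inl_ne_inr (a := i) (b := i) (hinj (by simp [α, conj_eq_iff_im.2 h]))
  have hx : ∀ r ∈ univ, (x : ℂ) ≠ α r := by
    rintro (i | i) - h <;> apply him i <;> simpa [α] using (congrArg im h).symm
  have hprod : ((∏ i, ((x - (ω i).re) ^ 2 + (ω i).im ^ 2) : ℝ) : ℂ) = ∏ r, ((x : ℂ) - α r) := by
    simp [α, Fintype.prod_sum_type, ← prod_mul_distrib, ofReal_sub_mul_ofReal_sub_conj]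
  set t : ι ⊕ ι → ℂ := fun r => c * (nodalWeight univ α r * ((x : ℂ) - α r)⁻¹)
  have ht_inr (i : ι) : t (.inr i) = conj (t (.inl i)) := by
    simp [t, α, nodalWeight_rootsWithConj_inr]
  have ht_inl (i : ι) : t (.inl i) = (c / (x - ω i) / ∏ j ∈ univ.erase i,
      (ω i - ω j) * (ω i - conj (ω j))) / (2 * (ω i).im * I) := by
    simp only [t, α, nodalWeight_rootsWithConj_inl, rootsWithConj_inl]
    field_simp
  apply ofReal_injective
  calc ((c / ∏ i, ((x - (ω i).re) ^ 2 + (ω i).im ^ 2) : ℝ) : ℂ)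
      = c * (∏ r, ((x : ℂ) - α r))⁻¹ := by rw [ofReal_div, hprod, div_eq_mul_inv]
    _ = ∑ i, (t (.inl i) + conj (t (.inl i))) := by
      rw [inv_prod_sub_eq_sum_nodalWeight hinj.injOn univ_nonempty hx, mul_sum,
        Fintype.sum_sum_type, ← sum_add_distrib]
      exact sum_congr rfl fun i _ => by rw [← ht_inr]
    _ = _ := by
      push_cast
      refine sum_congr rfl fun i _ => ?_
      rw [add_conj, ht_inl, re_div_two_mul_I]
      push_cast
      field_simp [him i]

end ConjugatePairs

theorem g_succ {ω : ℂ} (hω : ω ≠ 0) (m : ℕ) : g (m + 1) ω = ω * g m ω + 1 / (m + 1) := by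
  rw [g, g, sum_Icc_succ_top (by omega : 1 ≤ m + 1)]
  push_cast
  field_simp
  ring

section UnitSegment

variable {ω : ℂ}

theorem one_sub_inv_mem_slitPlane (hω : ∀ x : ℝ, x ∈ Set.Icc (0 : ℝ) 1 → ω ≠ x) :
    1 - ω⁻¹ ∈ slitPlane := by
  rw [mem_slitPlane_iff_not_le_zero]
  intro hle
  obtain ⟨hre, him⟩ := Complex.le_def.1 hle
  have him' : ω⁻¹.im = 0 := by simpa using him
  have hre' : 1 ≤ ω⁻¹.re := by simpa using hre
  have hω_eq : ω = ((ω⁻¹.re)⁻¹ : ℝ) := by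
    rw [ofReal_inv, ← inv_inv ω, inv_inj]
    exact Complex.ext (by simp) (by simp [him'])
  exact hω _ ⟨inv_nonneg.2 (zero_le_one.trans hre'), inv_le_one_of_one_le₀ hre'⟩ hω_eq

theorem continuousOn_pow_div_sub (hω : ∀ x : ℝ, x ∈ Set.Icc (0 : ℝ) 1 → ω ≠ x) (m : ℕ) :
    ContinuousOn (fun x : ℝ => (x : ℂ) ^ m / (x - ω)) (Set.uIcc 0 1) := by
  rw [Set.uIcc_of_le zero_le_one]
  exact ContinuousOn.div (by fun_prop) (by fun_prop) fun x hx => sub_ne_zero.2 (hω x hx).symm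

theorem integral_inv_sub (hω : ∀ x : ℝ, x ∈ Set.Icc (0 : ℝ) 1 → ω ≠ x) :
    ∫ x in (0 : ℝ)..1, ((x : ℂ) - ω)⁻¹ = log (1 - 1 / ω) := by
  have hω0 : ω ≠ 0 := by simpa using hω 0 ⟨le_rfl, zero_le_one⟩
  have hlog := log_eq_integral (z := -ω⁻¹)
    (by simpa [← sub_eq_add_neg] using one_sub_inv_mem_slitPlane hω)
  rw [one_div, sub_eq_add_neg, hlog, ← integral_const_mul]
  refine integral_congr fun x _ => ?_
  have hden : 1 + (x : ℝ) • -ω⁻¹ = -(((x : ℂ) - ω) * ω⁻¹) := by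
    rw [real_smul]; field_simp; ring
  rw [hden, inv_neg, mul_inv, inv_inv, neg_mul_neg, mul_left_comm, inv_mul_cancel₀ hω0, mul_one]

theorem integral_pow_div_sub (hω : ∀ x : ℝ, x ∈ Set.Icc (0 : ℝ) 1 → ω ≠ x) (m : ℕ) :
    ∫ x in (0 : ℝ)..1, (x : ℂ) ^ m / (x - ω) = g m ω := by
  have hω0 : ω ≠ 0 := by simpa using hω 0 ⟨le_rfl, zero_le_one⟩
  induction m with
  | zero => simpa [g] using integral_inv_sub hω
  | succ m ih =>
    have hsplit : Set.EqOn (fun x : ℝ => (x : ℂ) ^ (m + 1) / (x - ω))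
        (fun x => (x : ℂ) ^ m + ω * ((x : ℂ) ^ m / (x - ω))) (Set.uIcc 0 1) := by
      intro x hx
      rw [Set.uIcc_of_le zero_le_one] at hx
      have : (x : ℂ) - ω ≠ 0 := sub_ne_zero.2 (hω x hx).symm
      field_simp
      ring
    have hpow : ∫ x in (0 : ℝ)..1, (x : ℂ) ^ m = 1 / (m + 1) := by
      simp_rw [← ofReal_pow]
      rw [integral_ofReal, integral_pow]
      push_cast
      ring
    have hcont : Continuous fun x : ℝ => (x : ℂ) ^ m := by fun_prop
    rw [integral_congr hsplit, integral_add (hcont.intervalIntegrable 0 1)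
      ((continuousOn_pow_div_sub hω m).intervalIntegrable.const_mul ω), integral_const_mul, ih,
      hpow, g_succ hω0]
    ring

end UnitSegment

theorem integral_general_roots_closed_form_general
    (n : ℕ) (hn : 1 ≤ n) (ω : Fin n → ℂ)
    (hseg : ∀ i, ∀ x : ℝ, x ∈ Set.Icc (0 : ℝ) 1 → ω i ≠ (x : ℂ))
    (hinj : Function.Injective
      (Sum.elim ω (fun i => (starRingEnd ℂ) (ω i)) : Fin n ⊕ Fin n → ℂ))
    (m : ℕ) :
    (∫ x in (0:ℝ)..1, x ^ m / ∏ i, ((x - (ω i).re) ^ 2 + (ω i).im ^ 2)) =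
      ∑ i, (g m (ω i) / ∏ j ∈ Finset.univ.erase i,
        ((ω i - ω j) * (ω i - (starRingEnd ℂ) (ω j)))).im / (ω i).im := by
  have : Nonempty (Fin n) := ⟨⟨0, hn⟩⟩
  have hpf (x : ℝ) := div_prod_eq_sum_im ω hinj (x ^ m) x
  simp only [ofReal_pow] at hpf
  have hcont (i : Fin n) := (continuousOn_pow_div_sub (hseg i) m).div_const
    (∏ j ∈ univ.erase i, (ω i - ω j) * (ω i - conj (ω j)))
  rw [integral_congr fun x _ => hpf x, integral_finsetSum fun i _ => by exact
    ((continuous_im.comp_continuousOn (hcont i)).div_const _).intervalIntegrable]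
  refine sum_congr rfl fun i _ => ?_
  have him_comm :=
    intervalIntegral_im ((hcont i).intervalIntegrable (μ := MeasureTheory.volume))
  simp only [RCLike.im_to_complex] at him_comm
  rw [integral_div, him_comm, integral_div, integral_pow_div_sub (hseg i)]

theorem integral_general_roots_closed_form
    (n : ℕ) (hn : 1 ≤ n) (ω : Fin n → ℂ)
    (him : ∀ i, (ω i).im ≠ 0)
    (hseg : ∀ i, ∀ x : ℝ, x ∈ Set.Icc (0 : ℝ) 1 → ω i ≠ (x : ℂ))
    (hinj : Function.Injective
      (Sum.elim ω (fun i => (starRingEnd ℂ) (ω i)) : Fin n ⊕ Fin n → ℂ))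
    (m : ℕ) :
    (∫ x in (0:ℝ)..1, x ^ m / ∏ i, ((x - (ω i).re) ^ 2 + (ω i).im ^ 2)) =
      ∑ i, (g m (ω i) / ∏ j ∈ Finset.univ.erase i,
        ((ω i - ω j) * (ω i - (starRingEnd ℂ) (ω j)))).im / (ω i).im :=
  integral_general_roots_closed_form_general n hn ω hseg hinj m
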